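/- If Φ is a faithful unital completely positive map on B(H), then the restriction of Φ to its decoherence-free algebra N is a *-automorphism of N. -/

import Mathlib

open Matrix
open scoped ComplexOrder

abbrev MatC (n : ℕ) := Matrix (Fin n) (Fin n) ℂ

/-- Complete positivity of a linear map on matrices: every matrix amplification
preserves positive semidefiniteness. -/
def IsCompletelyPositive {n : ℕ} (Φ : Module.End ℂ (MatC n)) : Prop :=
  ∀ (k : ℕ) (M : Matrix (Fin n × Fin k) (Fin n × Fin k) ℂ), M.PosSemidef →
    (Matrix.of fun p q : Fin n × Fin k =>
      Φ (Matrix.of fun i j => M (i, p.2) (j, q.2)) p.1 q.1).PosSemidef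

/-- The decoherence-free algebra of Φ. -/
def decFree {n : ℕ} (Φ : Module.End ℂ (MatC n)) : Set (MatC n) :=
  {X | ∀ (m : ℕ) (Y : MatC n), (Φ ^ m) (Y * X) = (Φ ^ m) Y * (Φ ^ m) X ∧
        (Φ ^ m) (X * Y) = (Φ ^ m) X * (Φ ^ m) Y}

/-- Faithfulness: existence of a full-rank stationary state for the
Hilbert-Schmidt adjoint of Φ. -/
def IsFaithful {n : ℕ} (Φ : Module.End ℂ (MatC n)) : Prop :=
  ∃ ρ : MatC n, ρ.PosDef ∧ ρ.trace = 1 ∧ ∀ A : MatC n, (Φ A * ρ).trace = (A * ρ).trace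

/-!
By complete positivity, `Φ` preserves adjoints and satisfies the Kadison–Schwarz inequality
`Φ (X* X) ≥ Φ(X)* Φ(X)`, as do all its powers; by Choi's argument, equality at `X` forces
`Φ (Y X) = Φ(Y) Φ(X)` for every `Y`. For `X ∈ N`, `Φ(X)* Φ(X) = Φ (X* X)`, so equality for `Φ ^ m`
at `Φ X` is equality for `Φ ^ (m + 1)` at `X`: hence `Φ` maps `N` into itself. If moreover
`Φ X = 0`, then `Φ (X* X) = 0`, and the invariant faithful state `ρ` gives `tr (X* X ρ) = 0`,
so `X = 0`. Thus `Φ` is injective on the finite-dimensional space `N`, hence bijective.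
-/

open scoped MatrixOrder in
theorem Matrix.PosSemidef.eq_zero_of_trace_mul_posDef_eq_zero {m 𝕜 : Type*} [Fintype m]
    [DecidableEq m] [RCLike 𝕜] {D ρ : Matrix m m 𝕜} (hD : D.PosSemidef) (hρ : ρ.PosDef)
    (h : (D * ρ).trace = 0) : D = 0 := by
  obtain ⟨y, hy, rfl⟩ :=
    CStarAlgebra.isStrictlyPositive_iff_eq_star_mul_self.mp hρ.isStrictlyPositive
  have hconj : (y * D * yᴴ).trace = 0 := by
    rwa [trace_mul_comm, ← Matrix.mul_assoc, ← star_eq_conjTranspose, trace_mul_comm]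
  have hzero := (hD.mul_mul_conjTranspose_same y).trace_eq_zero_iff.mp hconj
  rwa [← star_eq_conjTranspose, hy.star.mul_left_eq_zero, hy.mul_right_eq_zero] at hzero

theorem Complex.eq_zero_of_forall_quadratic_nonneg {t e : ℂ} (he : 0 ≤ e)
    (h : ∀ c : ℂ, 0 ≤ star c * t + c * star t + c * star c * e) : t = 0 := by
  obtain ⟨r, hr, rfl⟩ : ∃ r : ℝ, 0 ≤ r ∧ e = r :=
    ⟨e.re, by simpa using (Complex.le_def.mp he).1, Complex.ext rfl (Complex.le_def.mp he).2.symm⟩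
  set s : ℝ := (r + 1)⁻¹
  have hs : 0 < s := by positivity
  have hsr : s * r < 1 := by
    rw [inv_mul_lt_one₀ (by positivity)]; linarith
  set c : ℂ := -(s : ℂ) * t
  have hval : star c * t + c * star t + c * star c * r
      = ((s * (s * r - 2) * Complex.normSq t : ℝ) : ℂ) := by
    simp only [c, star_mul', star_neg, Complex.star_def, Complex.conj_ofReal]
    push_cast
    rw [← Complex.mul_conj]
    ring
  have hnonneg := h c
  rw [hval, Complex.zero_le_real] at hnonneg
  have hneg : s * (s * r - 2) < 0 := mul_neg_of_pos_of_neg hs (by linarith)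
  exact Complex.normSq_eq_zero.mp
    (le_antisymm (nonpos_of_mul_nonneg_right hnonneg hneg) (Complex.normSq_nonneg t))

theorem Matrix.eq_zero_of_forall_dotProduct_mulVec_eq_zero {m : Type*} [Fintype m]
    [DecidableEq m] {T : Matrix m m ℂ} (h : ∀ v : m → ℂ, star v ⬝ᵥ (T *ᵥ v) = 0) : T = 0 := by
  have hadj : toEuclideanLin Tᴴ = 0 := (inner_map_self_eq_zero _).mp fun x => by
    rw [EuclideanSpace.inner_eq_star_dotProduct, toLpLin_apply, WithLp.ofLp_toLp,
      star_mulVec, conjTranspose_conjTranspose, dotProduct_comm, ← dotProduct_mulVec]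
    exact h _
  rw [← conjTranspose_eq_zero]
  exact toEuclideanLin.map_eq_zero_iff.mp hadj

namespace IsCompletelyPositive

variable {n : ℕ} {Φ Ψ : Module.End ℂ (MatC n)}

theorem posSemidef_apply (hΦ : IsCompletelyPositive Φ) {A : MatC n} (hA : A.PosSemidef) :
    (Φ A).PosSemidef :=
  (hΦ 1 _ (hA.submatrix (Prod.fst : Fin n × Fin 1 → Fin n))).submatrix fun i => (i, 0)

theorem mul (hΦ : IsCompletelyPositive Φ) (hΨ : IsCompletelyPositive Ψ) :
    IsCompletelyPositive (Φ * Ψ) :=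
  fun k M hM => hΦ k _ (hΨ k M hM)

theorem one : IsCompletelyPositive (1 : Module.End ℂ (MatC n)) :=
  fun _ _ hM => hM

theorem pow (hΦ : IsCompletelyPositive Φ) (m : ℕ) : IsCompletelyPositive (Φ ^ m) := by
  induction m with
  | zero => exact one
  | succ m ih => rw [pow_succ]; exact ih.mul hΦ

open scoped MatrixOrder in
theorem map_conjTranspose (hΦ : IsCompletelyPositive Φ) (A : MatC n) : Φ Aᴴ = (Φ A)ᴴ :=
  map_star (PositiveLinearMap.mk₀ Φ fun _ hA => (hΦ.posSemidef_apply hA.posSemidef).nonneg) A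

theorem fromBlocks_posSemidef (hΦ : IsCompletelyPositive Φ) {P Q R S : MatC n}
    (h : (fromBlocks P Q R S).PosSemidef) :
    (fromBlocks (Φ P) (Φ Q) (Φ R) (Φ S)).PosSemidef := by
  let e : Fin n × Fin 2 ≃ Fin n ⊕ Fin n :=
    (Equiv.prodComm _ _).trans ((finTwoEquiv.prodCongr (.refl _)).trans (.boolProdEquivSum _))
  convert (hΦ 2 _ (h.submatrix e)).submatrix e.symm using 1
  ext (i | i) (j | j) <;> rfl

/-- The Kadison–Schwarz inequality. -/
theorem posSemidef_map_conjTranspose_mul_self_sub (hΦ : IsCompletelyPositive Φ) (hu : Φ 1 = 1)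
    (A : MatC n) : (Φ (Aᴴ * A) - (Φ A)ᴴ * Φ A).PosSemidef := by
  have hblock : (fromBlocks (Aᴴ * A) Aᴴ A 1).PosSemidef := by
    have h := posSemidef_conjTranspose_mul_self (fromCols A (1 : MatC n))
    rw [conjTranspose_fromCols_eq_fromRows_conjTranspose, fromRows_mul_fromCols,
      conjTranspose_one, Matrix.mul_one, Matrix.one_mul, Matrix.one_mul] at h
    exact h
  have hmap := hΦ.fromBlocks_posSemidef hblock
  rw [hΦ.map_conjTranspose, hu] at hmap
  let : Invertible (1 : MatC n) := invertibleOne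
  have := (PosDef.fromBlocks₂₂ (Φ (Aᴴ * A)) (Φ A)ᴴ PosDef.one).mp
    (by rwa [conjTranspose_conjTranspose])
  rwa [inv_one, Matrix.mul_one, conjTranspose_conjTranspose] at this

theorem map_conjTranspose_mul_of_map_conjTranspose_mul_self (hΦ : IsCompletelyPositive Φ)
    (hu : Φ 1 = 1) {X : MatC n} (hX : Φ (Xᴴ * X) = (Φ X)ᴴ * Φ X) (Y : MatC n) :
    Φ (Yᴴ * X) = (Φ Y)ᴴ * Φ X := by
  set T := Φ (Yᴴ * X) - (Φ Y)ᴴ * Φ X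
  set E := Φ (Yᴴ * Y) - (Φ Y)ᴴ * Φ Y
  have hpencil (c : ℂ) : (star c • T + c • Tᴴ + (c * star c) • E).PosSemidef := by
    convert hΦ.posSemidef_map_conjTranspose_mul_self_sub hu (X + c • Y) using 1
    simp only [T, E, conjTranspose_sub, conjTranspose_mul, conjTranspose_conjTranspose,
      ← hΦ.map_conjTranspose, conjTranspose_add, conjTranspose_smul, add_mul, mul_add, map_add,
      _root_.map_smul, smul_mul_assoc, mul_smul_comm, hX]
    module
  have hform (v : Fin n → ℂ) : star v ⬝ᵥ (T *ᵥ v) = 0 := by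
    have hE := hΦ.posSemidef_map_conjTranspose_mul_self_sub hu Y
    refine Complex.eq_zero_of_forall_quadratic_nonneg (hE.dotProduct_mulVec_nonneg v) fun c => ?_
    have hadj : star v ⬝ᵥ (Tᴴ *ᵥ v) = star (star v ⬝ᵥ (T *ᵥ v)) := by
      rw [star_dotProduct, star_mulVec, conjTranspose_conjTranspose, ← dotProduct_mulVec]
    have h := (hpencil c).dotProduct_mulVec_nonneg v
    rwa [add_mulVec, add_mulVec, smul_mulVec, smul_mulVec, smul_mulVec, dotProduct_add,
      dotProduct_add, dotProduct_smul, dotProduct_smul, dotProduct_smul, hadj] at h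
  exact sub_eq_zero.mp (eq_zero_of_forall_dotProduct_mulVec_eq_zero hform)

theorem map_mul_of_map_conjTranspose_mul_self (hΦ : IsCompletelyPositive Φ) (hu : Φ 1 = 1)
    {X : MatC n} (hX : Φ (Xᴴ * X) = (Φ X)ᴴ * Φ X) (Y : MatC n) : Φ (Y * X) = Φ Y * Φ X := by
  simpa [hΦ.map_conjTranspose] using
    hΦ.map_conjTranspose_mul_of_map_conjTranspose_mul_self hu hX Yᴴ

theorem map_mul_of_map_mul_conjTranspose_self (hΦ : IsCompletelyPositive Φ) (hu : Φ 1 = 1)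
    {X : MatC n} (hX : Φ (X * Xᴴ) = Φ X * (Φ X)ᴴ) (Y : MatC n) : Φ (X * Y) = Φ X * Φ Y := by
  have hXstar : Φ (Xᴴᴴ * Xᴴ) = (Φ Xᴴ)ᴴ * Φ Xᴴ := by
    simpa [hΦ.map_conjTranspose] using hX
  rw [← conjTranspose_conjTranspose (X * Y), hΦ.map_conjTranspose, conjTranspose_mul,
    hΦ.map_conjTranspose_mul_of_map_conjTranspose_mul_self hu hXstar Y, conjTranspose_mul,
    hΦ.map_conjTranspose, conjTranspose_conjTranspose, conjTranspose_conjTranspose]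

end IsCompletelyPositive

section decFree

variable {n : ℕ} {Φ : Module.End ℂ (MatC n)}

variable (Φ) in
def decFreeSubmodule : Submodule ℂ (MatC n) where
  carrier := decFree Φ
  add_mem' hX hY m Z :=
    ⟨by rw [mul_add, map_add, map_add, (hX m Z).1, (hY m Z).1, mul_add],
      by rw [add_mul, map_add, map_add, (hX m Z).2, (hY m Z).2, add_mul]⟩
  zero_mem' m Z := by simp
  smul_mem' c X hX m Z :=
    ⟨by rw [mul_smul_comm, map_smul, map_smul, (hX m Z).1, mul_smul_comm],
      by rw [smul_mul_assoc, map_smul, map_smul, (hX m Z).2, smul_mul_assoc]⟩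

theorem map_mem_decFree (hΦ : IsCompletelyPositive Φ) (hu : Φ 1 = 1) {X : MatC n}
    (hX : X ∈ decFree Φ) : Φ X ∈ decFree Φ := by
  intro m Y
  have hu' : (Φ ^ m) 1 = 1 := (Module.End.pow_apply Φ m 1).trans (Function.iterate_fixed hu m)
  have hshift (Z : MatC n) : (Φ ^ m) (Φ Z) = (Φ ^ (m + 1)) Z := by
    rw [pow_succ, Module.End.mul_apply]
  have hstar := hΦ.map_conjTranspose
  have hstar' := (hΦ.pow (m + 1)).map_conjTranspose
  have hX₁ := hX 1 Xᴴ
  rw [pow_one] at hX₁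
  refine ⟨(hΦ.pow m).map_mul_of_map_conjTranspose_mul_self hu' ?_ Y,
    (hΦ.pow m).map_mul_of_map_mul_conjTranspose_self hu' ?_ Y⟩
  · rw [← hstar, ← hX₁.1, hshift, hshift, (hX (m + 1) Xᴴ).1, hstar']
  · rw [← hstar, ← hX₁.2, hshift, hshift, (hX (m + 1) Xᴴ).2, hstar']

theorem IsFaithful.eq_zero_of_posSemidef_of_map_eq_zero (hΦ : IsFaithful Φ) {A : MatC n}
    (hA : A.PosSemidef) (h : Φ A = 0) : A = 0 := by
  obtain ⟨ρ, hρ, -, hinv⟩ := hΦ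
  exact hA.eq_zero_of_trace_mul_posDef_eq_zero hρ (by rw [← hinv, h, Matrix.zero_mul, trace_zero])

theorem IsFaithful.injOn_decFree (hΦ : IsFaithful Φ) : Set.InjOn Φ (decFree Φ) := by
  intro X hX Y hY hXY
  set Z := X - Y
  have hZ : Z ∈ decFree Φ := (decFreeSubmodule Φ).sub_mem hX hY
  have hΦZ : Φ Z = 0 := by rw [map_sub, hXY, sub_self]
  have hΦZZ : Φ (Zᴴ * Z) = 0 := by
    simpa [hΦZ] using (hZ 1 Zᴴ).1
  have := hΦ.eq_zero_of_posSemidef_of_map_eq_zero (posSemidef_conjTranspose_mul_self Z) hΦZZ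
  exact sub_eq_zero.mp (conjTranspose_mul_self_eq_zero.mp this)

end decFree

/-- For a faithful UCP map, the restriction of Φ to its decoherence-free algebra
is a *-automorphism: a multiplicative, star-preserving bijection of N onto itself. -/
theorem decFree_restriction_automorphism {n : ℕ} (Φ : Module.End ℂ (MatC n))
    (hCP : IsCompletelyPositive Φ) (hunit : Φ 1 = 1) (hfaith : IsFaithful Φ) :
    Set.BijOn (fun X => Φ X) (decFree Φ) (decFree Φ) ∧
      (∀ X ∈ decFree Φ, ∀ Y ∈ decFree Φ, Φ (X * Y) = Φ X * Φ Y) ∧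
      (∀ X ∈ decFree Φ, Φ Xᴴ = (Φ X)ᴴ) := by
  have hmaps : ∀ X ∈ decFreeSubmodule Φ, Φ X ∈ decFreeSubmodule Φ :=
    fun _ hX => map_mem_decFree hCP hunit hX
  have hinj := hfaith.injOn_decFree
  refine ⟨⟨hmaps, hinj, (LinearMap.injOn_iff_surjOn hmaps).mp hinj⟩,
    fun X hX Y _ => ?_, fun X _ => hCP.map_conjTranspose X⟩
  simpa using (hX 1 Y).2
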